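/- (Convergence of ADM for the TV/L1 problem.) Let V, W be the spaces of real m×n and p×q matrices with the Frobenius inner product, H : V → V and L : V → W linear maps, B ∈ V, F(R) = ‖R − B‖_{1,1} = Σ_{i,j}|R_{ij} − B_{ij}|, G : W → ℝ convex, β > 0, ρ > 0, and L_{β,ρ}(X,R,Y,Z,W') = F(R) + G(Y) + (β/2)‖L(X) − Y‖_F² + ⟨L(X) − Y, Z⟩_F + (ρ/2)‖H(X) − R‖_F² + ⟨H(X) − R, W'⟩_F. Assume (X*,R*,Y*,Z*,W'*) is a saddle point of L_{β,ρ}. Let sequences satisfy: (X_k,R_k,Y_k) minimizes (X,R,Y) ↦ L_{β,ρ}(X,R,Y,Z_k,W_k); Z_{k+1} = Z_k + β(L(X_k) − Y_k); W_{k+1} = W_k + ρ(H(X_k) − R_k). Then (1) F(R_k) + G(Y_k) → F(R*) + G(Y*), (2) ‖L(X_k) − Y_k‖_F → 0, and (3) ‖H(X_k) − R_k‖_F → 0 as k → ∞. -/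

import Mathlib

/-!
Rescaling the multipliers by `1/√β` and `1/√ρ` turns `L_{β,ρ}` into
`f x + ‖A x‖² / 2 + ⟪A x, z⟫` for the convex `f (X, R, Y) = F R + G Y` and one linear
residual map `A`, and the iteration into the method of multipliers `z_{k+1} = z_k + A x_k`.
At a saddle point `(x*, z*)` we have `A x* = 0`; testing the minimality of `x_k` and of `x*`
against convex combinations of the two shows that `‖z_k - z*‖²` drops by at least
`‖A x_k‖² / 2` at every step. Hence `∑ ‖A x_k‖² < ∞`, the multipliers stay bounded, and
`f x_k` is squeezed between `f x* - ‖A x_k‖² / 8 - ⟪A x_k, z*⟫` and `f x* - ⟪A x_k, z_k⟫`,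
which both tend to `f x*`.
-/

open Matrix

/-- Frobenius inner product on real matrices. -/
noncomputable def fip {m n : ℕ} (A B : Matrix (Fin m) (Fin n) ℝ) : ℝ :=
  (Aᵀ * B).trace

/-- Frobenius norm on real matrices. -/
noncomputable def fnorm {m n : ℕ} (A : Matrix (Fin m) (Fin n) ℝ) : ℝ :=
  Real.sqrt (fip A A)

/-- The augmented Lagrangian `L_{β,ρ}(X,R,Y,Z,W')` for the TV/L1 model. -/
noncomputable def lag5 {m n p q : ℕ}
    (H : Matrix (Fin m) (Fin n) ℝ →ₗ[ℝ] Matrix (Fin m) (Fin n) ℝ)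
    (L : Matrix (Fin m) (Fin n) ℝ →ₗ[ℝ] Matrix (Fin p) (Fin q) ℝ)
    (F : Matrix (Fin m) (Fin n) ℝ → ℝ) (G : Matrix (Fin p) (Fin q) ℝ → ℝ)
    (β ρ : ℝ)
    (X R : Matrix (Fin m) (Fin n) ℝ) (Y Z : Matrix (Fin p) (Fin q) ℝ)
    (W' : Matrix (Fin m) (Fin n) ℝ) : ℝ :=
  F R + G Y + β / 2 * (fnorm (L X - Y)) ^ 2 + fip (L X - Y) Z
    + ρ / 2 * (fnorm (H X - R)) ^ 2 + fip (H X - R) W'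

/-- Saddle point of the five-variable augmented Lagrangian. -/
def IsSaddle5 {m n p q : ℕ}
    (Φ : Matrix (Fin m) (Fin n) ℝ → Matrix (Fin m) (Fin n) ℝ →
      Matrix (Fin p) (Fin q) ℝ → Matrix (Fin p) (Fin q) ℝ →
      Matrix (Fin m) (Fin n) ℝ → ℝ)
    (Xs Rs : Matrix (Fin m) (Fin n) ℝ) (Ys Zs : Matrix (Fin p) (Fin q) ℝ)
    (Ws : Matrix (Fin m) (Fin n) ℝ) : Prop :=
  ∀ X R Y Z W', Φ Xs Rs Ys Z W' ≤ Φ Xs Rs Ys Zs Ws ∧ Φ Xs Rs Ys Zs Ws ≤ Φ X R Y Zs Ws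

open Filter Topology

open Set
open scoped InnerProductSpace

theorem tendsto_zero_of_add_le {e a : ℕ → ℝ} (he : ∀ k, 0 ≤ e k) (ha : ∀ k, 0 ≤ a k)
    (hstep : ∀ k, e (k + 1) + a k ≤ e k) : Tendsto a atTop (𝓝 0) := by
  have hsum : ∀ N, ∑ k ∈ Finset.range N, a k ≤ e 0 := fun N => by
    have htel : ∑ k ∈ Finset.range N, a k ≤ ∑ k ∈ Finset.range N, (e k - e (k + 1)) :=
      Finset.sum_le_sum fun k _ => by linarith [hstep k]
    rw [Finset.sum_range_sub'] at htel
    linarith [he N]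
  exact (summable_of_sum_range_le ha hsum).tendsto_atTop_zero

theorem tendsto_zero_of_const_mul_le {ι : Type*} {l : Filter ι} {a b : ι → ℝ} {c : ℝ}
    (hc : 0 < c) (ha : ∀ k, 0 ≤ a k) (hab : ∀ k, c * a k ≤ b k)
    (hb : Tendsto b l (𝓝 0)) :
    Tendsto a l (𝓝 0) :=
  squeeze_zero ha (fun k => (le_div_iff₀' hc).2 (hab k)) (by simpa using hb.div_const c)

theorem tendsto_inner_zero_of_norm_le {E ι : Type*} [NormedAddCommGroup E]
    [InnerProductSpace ℝ E] {l : Filter ι} {u v : ι → E} {C : ℝ}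
    (hu : Tendsto (fun k => ‖u k‖) l (𝓝 0)) (hv : ∀ k, ‖v k‖ ≤ C) :
    Tendsto (fun k => ⟪u k, v k⟫_ℝ) l (𝓝 0) :=
  squeeze_zero_norm
    (fun k => (norm_inner_le_norm _ _).trans (mul_le_mul_of_nonneg_left (hv k) (norm_nonneg _)))
    (by simpa using hu.mul_const C)

section MethodOfMultipliers

variable {V E : Type*} [AddCommGroup V] [Module ℝ V] [NormedAddCommGroup E]
  [InnerProductSpace ℝ E] {f : V → ℝ} {A : V →ₗ[ℝ] E}

variable (f A) in
noncomputable def augLagrangian (x : V) (z : E) : ℝ :=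
  f x + ‖A x‖ ^ 2 / 2 + ⟪A x, z⟫_ℝ

theorem map_eq_zero_of_augLagrangian_add_le {x : V} {z : E}
    (h : augLagrangian f A x (z + A x) ≤ augLagrangian f A x z) : A x = 0 := by
  simp only [augLagrangian, inner_add_right, real_inner_self_eq_norm_sq] at h
  exact norm_eq_zero.mp (by nlinarith [norm_nonneg (A x)])

theorem augLagrangian_combo_le (hf : ConvexOn ℝ univ f) {xs : V} (hxs : A xs = 0) (x : V)
    (z : E) {t : ℝ} (ht₀ : 0 ≤ t) (ht₁ : t ≤ 1) :
    augLagrangian f A (t • x + (1 - t) • xs) z ≤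
      t * f x + (1 - t) * f xs + t ^ 2 * (‖A x‖ ^ 2 / 2) + t * ⟪A x, z⟫_ℝ := by
  have hconv := hf.2 (mem_univ x) (mem_univ xs) ht₀ (sub_nonneg.2 ht₁) (add_sub_cancel t 1)
  simp only [smul_eq_mul] at hconv
  simp only [augLagrangian, map_add, map_smul, hxs, smul_zero, add_zero, norm_smul,
    Real.norm_of_nonneg ht₀, mul_pow, real_inner_smul_left]
  linarith

variable {xs : V} {zs : E}

theorem add_inner_le_of_minimizes (hf : ConvexOn ℝ univ f) (hxs : A xs = 0) {x : V} {z : E}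
    (hmin : ∀ x', augLagrangian f A x z ≤ augLagrangian f A x' z) :
    f x + 7 / 8 * ‖A x‖ ^ 2 + ⟪A x, z⟫_ℝ ≤ f xs := by
  have h := (hmin _).trans
    (augLagrangian_combo_le hf hxs x z (t := 3 / 4) (by norm_num) (by norm_num))
  simp only [augLagrangian] at h
  linarith

theorem le_add_inner_of_saddle (hf : ConvexOn ℝ univ f) (hxs : A xs = 0)
    (hprimal : ∀ x, augLagrangian f A xs zs ≤ augLagrangian f A x zs) (x : V) :
    f xs ≤ f x + ‖A x‖ ^ 2 / 8 + ⟪A x, zs⟫_ℝ := by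
  have h := (hprimal _).trans
    (augLagrangian_combo_le hf hxs x zs (t := 1 / 4) (by norm_num) (by norm_num))
  simp only [augLagrangian, hxs, norm_zero, inner_zero_left] at h
  linarith

theorem norm_multiplier_update_sq_le (hf : ConvexOn ℝ univ f) (hxs : A xs = 0)
    (hprimal : ∀ x, augLagrangian f A xs zs ≤ augLagrangian f A x zs) {x : V} {z : E}
    (hmin : ∀ x', augLagrangian f A x z ≤ augLagrangian f A x' z) :
    ‖z + A x - zs‖ ^ 2 + ‖A x‖ ^ 2 / 2 ≤ ‖z - zs‖ ^ 2 := by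
  have hupper := add_inner_le_of_minimizes hf hxs hmin
  have hlower := le_add_inner_of_saddle hf hxs hprimal x
  rw [show z + A x - zs = (z - zs) + A x by abel, norm_add_sq_real, real_inner_comm,
    inner_sub_right]
  linarith

theorem tendsto_methodOfMultipliers (hf : ConvexOn ℝ univ f) (hxs : A xs = 0)
    (hprimal : ∀ x, augLagrangian f A xs zs ≤ augLagrangian f A x zs)
    {x : ℕ → V} {z : ℕ → E}
    (hmin : ∀ k x', augLagrangian f A (x k) (z k) ≤ augLagrangian f A x' (z k))
    (hz : ∀ k, z (k + 1) = z k + A (x k)) :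
    Tendsto (fun k => f (x k)) atTop (𝓝 (f xs)) ∧
      Tendsto (fun k => ‖A (x k)‖) atTop (𝓝 0) := by
  have hdecay k : ‖z (k + 1) - zs‖ ^ 2 + ‖A (x k)‖ ^ 2 / 2 ≤ ‖z k - zs‖ ^ 2 :=
    hz k ▸ norm_multiplier_update_sq_le hf hxs hprimal (hmin k)
  have hres : Tendsto (fun k => ‖A (x k)‖) atTop (𝓝 0) := by
    have h := ((tendsto_zero_of_add_le (e := fun k => ‖z k - zs‖ ^ 2)
      (fun k => sq_nonneg _) (fun k => by positivity) hdecay).const_mul 2).sqrt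
    simpa [mul_div_cancel₀, Real.sqrt_sq] using h
  have hbdd k : ‖z k - zs‖ ≤ ‖z 0 - zs‖ := by
    induction k with
    | zero => rfl
    | succ k ih =>
      have hsq : ‖z (k + 1) - zs‖ ^ 2 ≤ ‖z k - zs‖ ^ 2 := by
        linarith [hdecay k, sq_nonneg ‖A (x k)‖]
      exact ((pow_le_pow_iff_left₀ (norm_nonneg _) (norm_nonneg _) two_ne_zero).1 hsq).trans ih
  have hinner : Tendsto (fun k => ⟪A (x k), z k⟫_ℝ) atTop (𝓝 0) :=
    tendsto_inner_zero_of_norm_le hres fun k =>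
      (norm_le_norm_add_norm_sub' (z k) zs).trans (add_le_add_right (hbdd k) ‖zs‖)
  have hinner_s : Tendsto (fun k => ⟪A (x k), zs⟫_ℝ) atTop (𝓝 0) :=
    tendsto_inner_zero_of_norm_le hres fun _ => le_rfl
  refine ⟨tendsto_of_tendsto_of_tendsto_of_le_of_le
    (g := fun k => f xs - ‖A (x k)‖ ^ 2 / 8 - ⟪A (x k), zs⟫_ℝ)
    (h := fun k => f xs - ⟪A (x k), z k⟫_ℝ) ?_ ?_ (fun k => ?_) (fun k => ?_), hres⟩
  · simpa using (tendsto_const_nhds.sub ((hres.pow 2).div_const 8)).sub hinner_s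
  · simpa using tendsto_const_nhds.sub hinner
  · linarith [le_add_inner_of_saddle hf hxs hprimal (x k)]
  · linarith [add_inner_le_of_minimizes hf hxs (hmin k), sq_nonneg ‖A (x k)‖]

end MethodOfMultipliers

theorem convexOn_sum_abs_sub {ι κ : Type*} [Fintype ι] [Fintype κ] (B : Matrix ι κ ℝ) :
    ConvexOn ℝ univ fun R : Matrix ι κ ℝ => ∑ i, ∑ j, |R i j - B i j| := by
  refine ⟨convex_univ, fun R₁ _ R₂ _ a b ha hb hab => ?_⟩
  have hentry (i : ι) (j : κ) : |(a • R₁ + b • R₂) i j - B i j| ≤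
      a * |R₁ i j - B i j| + b * |R₂ i j - B i j| := by
    have hsplit :
        (a • R₁ + b • R₂) i j - B i j = a * (R₁ i j - B i j) + b * (R₂ i j - B i j) := by
      simp only [Matrix.add_apply, Matrix.smul_apply, smul_eq_mul]
      linear_combination B i j * hab
    rw [hsplit, ← abs_of_nonneg ha, ← abs_of_nonneg hb, ← abs_mul, ← abs_mul,
      abs_of_nonneg ha, abs_of_nonneg hb]
    exact abs_add_le _ _
  simpa only [smul_eq_mul, Finset.mul_sum, ← Finset.sum_add_distrib] using
    Finset.sum_le_sum fun i _ => Finset.sum_le_sum fun j _ => hentry i j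

section TVL1

variable {m n p q : ℕ}

noncomputable def frobeniusFlatten :
    Matrix (Fin m) (Fin n) ℝ →ₗ[ℝ] EuclideanSpace ℝ (Fin m × Fin n) where
  toFun A := WithLp.toLp 2 fun ij => A ij.1 ij.2
  map_add' _ _ := rfl
  map_smul' _ _ := rfl

theorem frobeniusFlatten_apply (A : Matrix (Fin m) (Fin n) ℝ) (ij : Fin m × Fin n) :
    frobeniusFlatten A ij = A ij.1 ij.2 :=
  rfl

theorem fip_eq_inner_frobeniusFlatten (A B : Matrix (Fin m) (Fin n) ℝ) :
    fip A B = ⟪frobeniusFlatten A, frobeniusFlatten B⟫_ℝ := by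
  simp only [fip, Matrix.trace, Matrix.diag, Matrix.mul_apply, Matrix.transpose_apply,
    PiLp.inner_apply, RCLike.inner_apply, conj_trivial, frobeniusFlatten_apply,
    Fintype.sum_prod_type]
  rw [Finset.sum_comm]
  simp only [mul_comm]

theorem fnorm_eq_norm_frobeniusFlatten (A : Matrix (Fin m) (Fin n) ℝ) :
    fnorm A = ‖frobeniusFlatten A‖ := by
  rw [fnorm, fip_eq_inner_frobeniusFlatten, real_inner_self_eq_norm_sq,
    Real.sqrt_sq (norm_nonneg _)]

abbrev TVL1Primal (m n p q : ℕ) :=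
  Matrix (Fin m) (Fin n) ℝ × Matrix (Fin m) (Fin n) ℝ × Matrix (Fin p) (Fin q) ℝ

abbrev TVL1Dual (m n p q : ℕ) :=
  WithLp 2 (EuclideanSpace ℝ (Fin p × Fin q) × EuclideanSpace ℝ (Fin m × Fin n))

noncomputable def tvl1Residual (β ρ : ℝ)
    (H : Matrix (Fin m) (Fin n) ℝ →ₗ[ℝ] Matrix (Fin m) (Fin n) ℝ)
    (L : Matrix (Fin m) (Fin n) ℝ →ₗ[ℝ] Matrix (Fin p) (Fin q) ℝ) :
    TVL1Primal m n p q →ₗ[ℝ] TVL1Dual m n p q :=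
  (WithLp.linearEquiv 2 ℝ _).symm.toLinearMap ∘ₗ
    ((√β • frobeniusFlatten ∘ₗ
        (L ∘ₗ LinearMap.fst ℝ _ _ - LinearMap.snd ℝ _ _ ∘ₗ LinearMap.snd ℝ _ _)).prod
      (√ρ • frobeniusFlatten ∘ₗ
        (H ∘ₗ LinearMap.fst ℝ _ _ - LinearMap.fst ℝ _ _ ∘ₗ LinearMap.snd ℝ _ _)))

theorem tvl1Residual_apply (β ρ : ℝ)
    (H : Matrix (Fin m) (Fin n) ℝ →ₗ[ℝ] Matrix (Fin m) (Fin n) ℝ)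
    (L : Matrix (Fin m) (Fin n) ℝ →ₗ[ℝ] Matrix (Fin p) (Fin q) ℝ)
    (X R : Matrix (Fin m) (Fin n) ℝ) (Y : Matrix (Fin p) (Fin q) ℝ) :
    tvl1Residual β ρ H L (X, R, Y) =
      WithLp.toLp 2 (√β • frobeniusFlatten (L X - Y), √ρ • frobeniusFlatten (H X - R)) :=
  rfl

noncomputable def tvl1Multiplier (β ρ : ℝ) (Z : Matrix (Fin p) (Fin q) ℝ)
    (W : Matrix (Fin m) (Fin n) ℝ) : TVL1Dual m n p q :=
  WithLp.toLp 2 ((√β)⁻¹ • frobeniusFlatten Z, (√ρ)⁻¹ • frobeniusFlatten W)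

variable {β ρ : ℝ} (H : Matrix (Fin m) (Fin n) ℝ →ₗ[ℝ] Matrix (Fin m) (Fin n) ℝ)
  (L : Matrix (Fin m) (Fin n) ℝ →ₗ[ℝ] Matrix (Fin p) (Fin q) ℝ)

theorem lag5_eq_augLagrangian (hβ : 0 < β) (hρ : 0 < ρ) (F : Matrix (Fin m) (Fin n) ℝ → ℝ)
    (G : Matrix (Fin p) (Fin q) ℝ → ℝ) (X R : Matrix (Fin m) (Fin n) ℝ)
    (Y Z : Matrix (Fin p) (Fin q) ℝ) (W : Matrix (Fin m) (Fin n) ℝ) :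
    lag5 H L F G β ρ X R Y Z W =
      augLagrangian (fun x : TVL1Primal m n p q => F x.2.1 + G x.2.2) (tvl1Residual β ρ H L)
        (X, R, Y) (tvl1Multiplier β ρ Z W) := by
  simp only [lag5, augLagrangian, tvl1Residual_apply, tvl1Multiplier,
    WithLp.prod_norm_sq_eq_of_L2, WithLp.prod_inner_apply, WithLp.toLp_fst, WithLp.toLp_snd,
    norm_smul, real_inner_smul_left, real_inner_smul_right, fnorm_eq_norm_frobeniusFlatten,
    fip_eq_inner_frobeniusFlatten, Real.norm_of_nonneg (Real.sqrt_nonneg _), mul_pow,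
    Real.sq_sqrt hβ.le, Real.sq_sqrt hρ.le]
  field_simp
  ring

theorem tvl1Multiplier_add_tvl1Residual (hβ : 0 < β) (hρ : 0 < ρ)
    (X R : Matrix (Fin m) (Fin n) ℝ) (Y Z : Matrix (Fin p) (Fin q) ℝ)
    (W : Matrix (Fin m) (Fin n) ℝ) :
    tvl1Multiplier β ρ Z W + tvl1Residual β ρ H L (X, R, Y) =
      tvl1Multiplier β ρ (Z + β • (L X - Y)) (W + ρ • (H X - R)) := by
  have hβ' : (√β)⁻¹ * β = √β := by
    rw [inv_mul_eq_div, div_eq_iff (Real.sqrt_pos.2 hβ).ne', Real.mul_self_sqrt hβ.le]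
  have hρ' : (√ρ)⁻¹ * ρ = √ρ := by
    rw [inv_mul_eq_div, div_eq_iff (Real.sqrt_pos.2 hρ).ne', Real.mul_self_sqrt hρ.le]
  simp only [tvl1Multiplier, tvl1Residual_apply, ← WithLp.toLp_add, Prod.mk_add_mk, map_add,
    map_smul, smul_add, smul_smul, hβ', hρ']

theorem sqrt_mul_fnorm_le_norm_tvl1Residual (X R : Matrix (Fin m) (Fin n) ℝ)
    (Y : Matrix (Fin p) (Fin q) ℝ) :
    √β * fnorm (L X - Y) ≤ ‖tvl1Residual β ρ H L (X, R, Y)‖ ∧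
      √ρ * fnorm (H X - R) ≤ ‖tvl1Residual β ρ H L (X, R, Y)‖ := by
  have hfst := WithLp.norm_fst_le (x := tvl1Residual β ρ H L (X, R, Y))
  have hsnd := WithLp.norm_snd_le (x := tvl1Residual β ρ H L (X, R, Y))
  simp only [tvl1Residual_apply, WithLp.toLp_fst, WithLp.toLp_snd, norm_smul,
    Real.norm_of_nonneg (Real.sqrt_nonneg _)] at hfst hsnd
  simp only [fnorm_eq_norm_frobeniusFlatten]
  exact ⟨hfst, hsnd⟩

end TVL1

theorem stmt17 {m n p q : ℕ}
    (H : Matrix (Fin m) (Fin n) ℝ →ₗ[ℝ] Matrix (Fin m) (Fin n) ℝ)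
    (L : Matrix (Fin m) (Fin n) ℝ →ₗ[ℝ] Matrix (Fin p) (Fin q) ℝ)
    (B : Matrix (Fin m) (Fin n) ℝ)
    (F : Matrix (Fin m) (Fin n) ℝ → ℝ)
    (hFdef : ∀ R, F R = ∑ i, ∑ j, |R i j - B i j|)
    (G : Matrix (Fin p) (Fin q) ℝ → ℝ) (hG : ConvexOn ℝ Set.univ G)
    (β ρ : ℝ) (hβ : 0 < β) (hρ : 0 < ρ)
    (Xs Rs : Matrix (Fin m) (Fin n) ℝ) (Ys Zs : Matrix (Fin p) (Fin q) ℝ)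
    (Ws : Matrix (Fin m) (Fin n) ℝ)
    (hsaddle : IsSaddle5 (lag5 H L F G β ρ) Xs Rs Ys Zs Ws)
    (X R W : ℕ → Matrix (Fin m) (Fin n) ℝ) (Y Z : ℕ → Matrix (Fin p) (Fin q) ℝ)
    (hmin : ∀ k, ∀ X' R' Y', lag5 H L F G β ρ (X k) (R k) (Y k) (Z k) (W k) ≤
      lag5 H L F G β ρ X' R' Y' (Z k) (W k))
    (hZ : ∀ k, Z (k+1) = Z k + β • (L (X k) - Y k))
    (hW : ∀ k, W (k+1) = W k + ρ • (H (X k) - R k)) :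
    Tendsto (fun k => F (R k) + G (Y k)) atTop (𝓝 (F Rs + G Ys)) ∧
    Tendsto (fun k => fnorm (L (X k) - Y k)) atTop (𝓝 0) ∧
    Tendsto (fun k => fnorm (H (X k) - R k)) atTop (𝓝 0) := by
  have hlag := lag5_eq_augLagrangian H L hβ hρ F G
  have hF : ConvexOn ℝ univ F := funext hFdef ▸ convexOn_sum_abs_sub B
  have hf : ConvexOn ℝ univ fun x : TVL1Primal m n p q => F x.2.1 + G x.2.2 :=
    (hF.comp_linearMap (LinearMap.fst ℝ _ _ ∘ₗ LinearMap.snd ℝ _ _)).add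
      (hG.comp_linearMap (LinearMap.snd ℝ _ _ ∘ₗ LinearMap.snd ℝ _ _))
  have hfeas : tvl1Residual β ρ H L (Xs, Rs, Ys) = 0 := by
    refine map_eq_zero_of_augLagrangian_add_le (f := fun x => F x.2.1 + G x.2.2)
      (z := tvl1Multiplier β ρ Zs Ws) ?_
    rw [tvl1Multiplier_add_tvl1Residual H L hβ hρ, ← hlag, ← hlag]
    exact (hsaddle 0 0 0 _ _).1
  obtain ⟨hobj, hres⟩ := tendsto_methodOfMultipliers hf hfeas
    (fun x => by simpa only [hlag] using (hsaddle x.1 x.2.1 x.2.2 0 0).2)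
    (x := fun k => (X k, R k, Y k)) (z := fun k => tvl1Multiplier β ρ (Z k) (W k))
    (fun k x => by simpa only [hlag] using hmin k x.1 x.2.1 x.2.2)
    (fun k => by rw [hZ, hW, tvl1Multiplier_add_tvl1Residual H L hβ hρ])
  have hbound k := sqrt_mul_fnorm_le_norm_tvl1Residual H L (β := β) (ρ := ρ) (X k) (R k) (Y k)
  exact ⟨hobj,
    tendsto_zero_of_const_mul_le (Real.sqrt_pos.2 hβ) (fun _ => Real.sqrt_nonneg _)
      (fun k => (hbound k).1) hres,
    tendsto_zero_of_const_mul_le (Real.sqrt_pos.2 hρ) (fun _ => Real.sqrt_nonneg _)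
      (fun k => (hbound k).2) hres⟩
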